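/- Let H be a modular hyperplane of a matroid M and let X be a subset of the cocircuit E(M)−H. Then the set {P_H(x,y) : x, y ∈ X, r({x,y}) = 2} (i.e., the union of all projections onto H of pairs of distinct non-parallel elements of X) is a round subset of M. -/

import Mathlib

open Set

namespace Matroid

variable {α : Type*} {β : Type*}

/-- The rank of a set in a matroid: the supremum of sizes of independent subsets. -/
noncomputable def mRank (M : Matroid α) (X : Set α) : ℕ :=
  sSup {n : ℕ | ∃ I, M.Indep I ∧ I ⊆ X ∧ I.ncard = n}

/-- The rank of a matroid. -/
noncomputable def mRk (M : Matroid α) : ℕ := M.mRank M.E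

/-- A flat `F` is modular if `r F + r F' = r (F ∪ F') + r (F ∩ F')` for every flat `F'`. -/
def IsModularFlat (M : Matroid α) (F : Set α) : Prop :=
  M.IsFlat F ∧ ∀ F', M.IsFlat F' →
    M.mRank F + M.mRank F' = M.mRank (F ∪ F') + M.mRank (F ∩ F')

/-- A proper flat is a flat other than the ground set. -/
def IsProperFlat (M : Matroid α) (F : Set α) : Prop := M.IsFlat F ∧ F ≠ M.E

/-- A vertical cover is a pair of proper flats whose union is the ground set. -/
def VerticalCover (M : Matroid α) (F F' : Set α) : Prop :=
  M.IsProperFlat F ∧ M.IsProperFlat F' ∧ F ∪ F' = M.E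

/-- A modular cover is a vertical cover by two modular flats. -/
def ModularCover (M : Matroid α) (F F' : Set α) : Prop :=
  M.VerticalCover F F' ∧ M.IsModularFlat F ∧ M.IsModularFlat F'

/-- A matroid is round if it has no vertical cover. -/
def Round (M : Matroid α) : Prop := ∀ F F', ¬ M.VerticalCover F F'

/-- A subset of the ground set is round if the restriction to it is round. -/
def RoundSet (M : Matroid α) (X : Set α) : Prop := X ⊆ M.E ∧ (M ↾ X).Round

/-- A rotunda is a maximal round flat. -/
def Rotunda (M : Matroid α) (R : Set α) : Prop :=
  M.IsFlat R ∧ M.RoundSet R ∧ ∀ R', M.IsFlat R' → M.RoundSet R' → R ⊆ R' → R' = R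

/-- A matroid of rank `r` is supersolvable if there is a chain of modular flats
`F 0 ⊆ F 1 ⊆ ⋯ ⊆ F r` with `r (F i) = i` for each `i`. -/
def Supersolvable (M : Matroid α) : Prop :=
  ∃ F : ℕ → Set α, (∀ i ≤ M.mRk, M.IsModularFlat (F i) ∧ M.mRank (F i) = i) ∧
    ∀ i < M.mRk, F i ⊆ F (i + 1)

/-- A matroid is saturated if every round flat is modular. -/
def Saturated (M : Matroid α) : Prop :=
  ∀ F, M.IsFlat F → M.RoundSet F → M.IsModularFlat F

/-- A circuit: a minimal dependent subset of the ground set. -/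
def Circ (M : Matroid α) (C : Set α) : Prop :=
  C ⊆ M.E ∧ ¬ M.Indep C ∧ ∀ D ⊂ C, M.Indep D

/-- A matroid is connected if it is non-empty and every two distinct elements lie in a
common circuit. -/
def ConnectedM (M : Matroid α) : Prop :=
  M.E.Nonempty ∧ ∀ x ∈ M.E, ∀ y ∈ M.E, x = y ∨ ∃ C, M.Circ C ∧ x ∈ C ∧ y ∈ C

/-- A hyperplane: a flat of rank `r M - 1`. -/
def IsHyperplane (M : Matroid α) (H : Set α) : Prop :=
  M.IsFlat H ∧ M.mRank H + 1 = M.mRk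

/-- The union of the projections `P_H(x, y) = H ∩ cl (x ∪ y)` onto the modular hyperplane `H`,
taken over all pairs of distinct rank-one flats `x = cl {a}`, `y = cl {b}` spanned by
elements `a, b` of `X`. -/
def projUnion (M : Matroid α) (H X : Set α) : Set α :=
  ⋃ a ∈ X, ⋃ b ∈ X, ⋃ (_ : M.closure {a} ≠ M.closure {b}), H ∩ M.closure {a, b}

/-- Two elements are related if they are equal or lie in a common circuit; the connected
components of a matroid are the restrictions to the equivalence classes of this relation. -/
def connRel (M : Matroid α) (x y : α) : Prop :=
  x = y ∨ ∃ C, M.Circ C ∧ x ∈ C ∧ y ∈ C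

/-- The rotunda graph of a matroid: vertices are the rotunda; two rotunda are adjacent if
they intersect and there is a modular cover separating them at their intersection. -/
def rotundaGraph (M : Matroid α) : SimpleGraph {R : Set α // M.Rotunda R} where
  Adj R₁ R₂ := R₁ ≠ R₂ ∧ (R₁.1 ∩ R₂.1).Nonempty ∧
    ∃ F₁ F₂, M.ModularCover F₁ F₂ ∧ R₁.1 ⊆ F₁ ∧ R₂.1 ⊆ F₂ ∧ F₁ ∩ F₂ = R₁.1 ∩ R₂.1
  symm := ⟨by
    rintro a b ⟨hne, hint, F₁, F₂, ⟨⟨hp1, hp2, hu⟩, hm1, hm2⟩, h1, h2, hi⟩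
    refine ⟨hne.symm, by rwa [Set.inter_comm], F₂, F₁,
      ⟨⟨hp2, hp1, by rwa [Set.union_comm]⟩, hm2, hm1⟩, h2, h1, ?_⟩
    rw [Set.inter_comm, hi, Set.inter_comm]⟩
  loopless := ⟨fun a h => h.1 rfl⟩

/-- A rotunda tree of `M`: a tree on the rotunda of `M` such that for each element `x` of the
ground set, the rotunda containing `x` induce a (nonempty) subtree. -/
def IsRotundaTree (M : Matroid α) (T : SimpleGraph {R : Set α // M.Rotunda R}) : Prop :=
  T.IsTree ∧ ∀ x ∈ M.E, (T.induce {t : {R : Set α // M.Rotunda R} | x ∈ t.1}).Connected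

/-- A legitimate weighting of `M`: zero on the empty set, and strictly monotone under proper
inclusion on the set consisting of `∅` and the pairwise intersections of distinct rotunda. -/
def LegitimateWeighting (M : Matroid α) (σ : Set α → ℕ) : Prop :=
  σ ∅ = 0 ∧
  ∀ X X' : Set α,
    (X = ∅ ∨ ∃ R R', M.Rotunda R ∧ M.Rotunda R' ∧ R ≠ R' ∧ X = R ∩ R') →
    (X' = ∅ ∨ ∃ R R', M.Rotunda R ∧ M.Rotunda R' ∧ R ≠ R' ∧ X' = R ∩ R') →
    X ⊂ X' → σ X < σ X'

/-- The total weight of a graph on the rotunda of `M`, where the edge joining rotunda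
`R` and `R'` gets weight `σ (R ∩ R')`. -/
noncomputable def treeWeight {M : Matroid α} (σ : Set α → ℕ)
    (T : SimpleGraph {R : Set α // M.Rotunda R}) : ℕ :=
  ∑ᶠ e ∈ T.edgeSet,
    Sym2.lift ⟨fun a b => σ (a.1 ∩ b.1), fun a b => by simp [Set.inter_comm]⟩ e

/-- A tree-decomposition of a matroid: a tree together with bags covering the ground set. -/
def IsTreeDecomp (M : Matroid α) (T : SimpleGraph β) (τ : β → Set α) : Prop :=
  T.IsTree ∧ ∀ x ∈ M.E, ∃ t, x ∈ τ t

/-- The node-width of a node `t` in a tree-decomposition `(T, τ)` of `M`: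
`(Σ_i r (τ t ∪ ⋃_{k ≠ i} F_k)) − (d − 1) · r M`, where `F_1, …, F_d` are the unions of the
bags over the connected components of `T − t`. -/
noncomputable def nodeWidth (M : Matroid α) (T : SimpleGraph β) (τ : β → Set α) (t : β) : ℤ :=
  (∑ᶠ c : (T.induce {s : β | s ≠ t}).ConnectedComponent,
      (M.mRank (τ t ∪ ⋃ (s : {s : β // s ≠ t})
        (_ : (T.induce {s : β | s ≠ t}).connectedComponentMk s ≠ c), τ s.1) : ℤ))
    - ((Nat.card (T.induce {s : β | s ≠ t}).ConnectedComponent : ℤ) - 1) * (M.mRk : ℤ)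

/-- The width of a tree-decomposition: the maximum node-width. -/
noncomputable def decompWidth (M : Matroid α) (T : SimpleGraph β) (τ : β → Set α) : ℤ :=
  sSup (Set.range (M.nodeWidth T τ))

/-- The tree-width of a matroid: the minimum width of a (finite) tree-decomposition. -/
noncomputable def treeWidth (M : Matroid α) : ℕ :=
  sInf {n : ℕ | ∃ (β : Type) (T : SimpleGraph β) (τ : β → Set α),
    Finite β ∧ M.IsTreeDecomp T τ ∧ ∀ t, M.nodeWidth T τ t ≤ (n : ℤ)}

end Matroid

namespace SimpleGraph

/-- A graph is chordal if every cycle with at least four edges has a chord: an edge of the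
graph joining two vertices of the cycle that is not an edge of the cycle. -/
def IsChordal {V : Type*} (G : SimpleGraph V) : Prop :=
  ∀ ⦃v : V⦄ (w : G.Walk v v), w.IsCycle → 4 ≤ w.length →
    ∃ x y, x ∈ w.support ∧ y ∈ w.support ∧ G.Adj x y ∧ s(x, y) ∉ w.edges

/-- A maximal clique of a graph. -/
def MaxClique {V : Type*} (G : SimpleGraph V) (C : Set V) : Prop :=
  G.IsClique C ∧ ∀ D, G.IsClique D → C ⊆ D → D = C

/-- The reduced clique graph of a graph: vertices are the maximal cliques; two maximal
cliques are adjacent if they intersect and every walk from one side to the other passes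
through their intersection. -/
def reducedCliqueGraph {V : Type*} (G : SimpleGraph V) :
    SimpleGraph {C : Set V // G.MaxClique C} where
  Adj C₁ C₂ := C₁ ≠ C₂ ∧ (C₁.1 ∩ C₂.1).Nonempty ∧
    ∀ u ∈ C₁.1 \ C₂.1, ∀ v ∈ C₂.1 \ C₁.1, ∀ p : G.Walk u v,
      ∃ z ∈ p.support, z ∈ C₁.1 ∩ C₂.1
  symm := ⟨by
    rintro a b ⟨hne, hint, hsep⟩
    refine ⟨hne.symm, by rwa [Set.inter_comm], fun u hu v hv p => ?_⟩
    obtain ⟨z, hz, hz2⟩ := hsep v hv u hu p.reverse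
    refine ⟨z, ?_, by rwa [Set.inter_comm]⟩
    simpa [SimpleGraph.Walk.support_reverse] using hz⟩
  loopless := ⟨fun a h => h.1 rfl⟩

end SimpleGraph

open Matroid

/-!
By modularity of `H`, the projection `P_H(a, b) = H ∩ cl {a, b}` of two non-parallel elements
of `E − H` is a point, and exchanging it with `a` gives `a ∈ cl (P_H(a, b) ∪ {b})`. So if a
flat `K ⊆ H` contains `P_H(a, b)` and `P_H(b, c)`, then `P_H(a, c) ⊆ H ∩ cl (K ∪ {b}) = K`:
for every `F`, the relation `P_H(a, b) ⊆ cl F` is an equivalence relation on `X`. If two flats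
`F₁, F₂` of the restriction cover it, each point `P_H(a, b)` lies in one of them, so the two
equivalence relations together relate all pairs; hence one of them alone does, and the
corresponding `Fᵢ` is the whole restriction.
-/

theorem Equivalence.forall_or_forall_of_forall_or {β : Type*} {r s : β → β → Prop}
    (hr : Equivalence r) (hs : Equivalence s) (h : ∀ a b, r a b ∨ s a b) :
    (∀ a b, r a b) ∨ ∀ a b, s a b := by
  by_contra! ⟨⟨a, b, hab⟩, c, d, hcd⟩
  have hsab : s a b := (h a b).resolve_left hab
  have hrcd : r c d := (h c d).resolve_right hcd
  by_cases hac : r a c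
  · have hsbc : s b c := (h b c).resolve_left fun hbc => hab (hr.trans hac (hr.symm hbc))
    have hsbd : s b d := (h b d).resolve_left fun hbd =>
      hab (hr.trans (hr.trans hac hrcd) (hr.symm hbd))
    exact hcd (hs.trans (hs.symm hsbc) hsbd)
  · have hsac : s a c := (h a c).resolve_left hac
    have hsad : s a d := (h a d).resolve_left fun had => hac (hr.trans had (hr.symm hrcd))
    exact hcd (hs.trans (hs.symm hsac) hsad)

namespace Matroid

variable {α : Type*} {M : Matroid α} {H K F F₁ F₂ R X Y : Set α} {a b c e z : α}

lemma IsFlat.closure_subset_of_subset (hF : M.IsFlat F) (h : X ⊆ F) : M.closure X ⊆ F :=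
  hF.closure ▸ M.closure_subset_closure h

lemma closure_inter_subset_of_isFlat_restrict (hF : (M ↾ R).IsFlat F) :
    M.closure F ∩ R ⊆ F := by
  have hFR : F ⊆ R := hF.subset_ground
  intro x hx
  rw [← hF.closure, restrict_closure_eq', inter_eq_self_of_subset_left hFR]
  exact Or.inl hx

lemma IsFlat.isNonloop_of_notMem (hH : M.IsFlat H) (he : e ∈ M.E \ H) : M.IsNonloop e :=
  isNonloop_of_notMem_closure (X := ∅) (fun h => he.2 (hH.closure_subset_of_subset
    (empty_subset H) h)) he.1

lemma IsFlat.notMem_closure_singleton (hH : M.IsFlat H) (he : e ∉ H) (hz : M.IsNonloop z)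
    (hzH : z ∈ H) : z ∉ M.closure {e} := fun h =>
  he (hH.closure_subset_of_subset (singleton_subset_iff.2 hzH) (hz.mem_closure_singleton h))

lemma IsFlat.inter_closure_pair_subset_loops (hH : M.IsFlat H) (ha : a ∉ H)
    (hab : M.closure {a} = M.closure {b}) : H ∩ M.closure {a, b} ⊆ M.loops := by
  have hcl : M.closure {a, b} = M.closure {a} := by
    rw [← singleton_union, ← closure_closure_union_closure_eq_closure_union, ← hab, union_self,
      closure_closure]
  rintro x ⟨hxH, hx⟩
  rw [hcl] at hx
  by_contra hxl
  exact hH.notMem_closure_singleton ha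
    ((isNonloop_iff_notMem_loops (M.closure_subset_ground _ hx)).2 hxl) hxH hx

/-- Exchange: a point `x` of `H ∩ cl (K ∪ {e})` outside `cl K` would put `e` in
`cl (K ∪ {x}) ⊆ H`. -/
lemma IsFlat.inter_closure_insert_subset (hH : M.IsFlat H) (hK : K ⊆ H) (heH : e ∉ H) :
    H ∩ M.closure (insert e K) ⊆ M.closure K := by
  rintro x ⟨hxH, hx⟩
  by_contra hxK
  exact heH (hH.closure_subset_of_subset (insert_subset hxH hK) (closure_exchange ⟨hx, hxK⟩).1)

lemma inter_closure_pair_subset_projUnion (ha : a ∈ X) (hb : b ∈ X)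
    (hab : M.closure {a} ≠ M.closure {b}) : H ∩ M.closure {a, b} ⊆ M.projUnion H X := by
  intro x hx
  simp only [projUnion, mem_iUnion]
  exact ⟨a, ha, b, hb, hab, hx⟩

lemma projUnion_subset : M.projUnion H X ⊆ H := by
  simp only [projUnion, iUnion_subset_iff]
  exact fun _ _ _ _ _ => inter_subset_left

lemma eq_projUnion_of_forall_inter_closure_pair_subset
    (hF : (M ↾ M.projUnion H X).IsFlat F)
    (h : ∀ a b : X, H ∩ M.closure {a.1, b.1} ⊆ M.closure F) : F = M.projUnion H X := by
  refine hF.subset_ground.antisymm fun x (hx : x ∈ M.projUnion H X) =>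
    closure_inter_subset_of_isFlat_restrict hF ⟨?_, hx⟩
  simp only [projUnion, mem_iUnion] at hx
  obtain ⟨a, ha, b, hb, -, hx⟩ := hx
  exact h ⟨a, ha⟩ ⟨b, hb⟩ hx

section RankFinite

variable [M.RankFinite]

lemma cast_mRank (X : Set α) : (M.mRank X : ℕ∞) = M.eRk X := by
  obtain ⟨I, hI⟩ := M.exists_isBasis' X
  have hIfin : I.Finite := hI.indep.finite
  have hmax : IsGreatest {n : ℕ | ∃ J, M.Indep J ∧ J ⊆ X ∧ J.ncard = n} I.ncard := by
    refine ⟨⟨I, hI.indep, hI.subset, rfl⟩, ?_⟩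
    rintro _ ⟨J, hJ, hJX, rfl⟩
    have hle := hJ.encard_le_eRk_of_subset hJX
    rwa [← hI.encard_eq_eRk, ← hIfin.cast_ncard_eq, ← hJ.finite.cast_ncard_eq,
      Nat.cast_le] at hle
  rw [mRank, hmax.csSup_eq, hIfin.cast_ncard_eq, hI.encard_eq_eRk]

lemma mRank_mono (h : X ⊆ Y) : M.mRank X ≤ M.mRank Y := by
  have hle := M.eRk_mono h
  rwa [← cast_mRank, ← cast_mRank, Nat.cast_le] at hle

lemma mRank_closure (X : Set α) : M.mRank (M.closure X) = M.mRank X := by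
  have heq := M.eRk_closure_eq X
  rwa [← cast_mRank, ← cast_mRank, Nat.cast_inj] at heq

lemma mRank_insert (he : e ∈ M.E \ M.closure X) : M.mRank (insert e X) = M.mRank X + 1 := by
  have heq := eRk_insert_eq_add_one he
  rw [← cast_mRank, ← cast_mRank] at heq
  exact_mod_cast heq

lemma IsModularFlat.mRank_inter_closure_add_one (hmod : M.IsModularFlat H)
    (hH : M.IsHyperplane H) (hY : Y ⊆ M.E) (heY : e ∈ Y) (heH : e ∉ H) :
    M.mRank (H ∩ M.closure Y) + 1 = M.mRank Y := by
  have hspan : M.mRank (H ∪ M.closure Y) = M.mRk :=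
    le_antisymm (mRank_mono (union_subset hH.1.subset_ground (M.closure_subset_ground Y))) <|
      calc M.mRk = M.mRank (insert e H) := by
            rw [mRank_insert ⟨hY heY, by rwa [hH.1.closure]⟩, hH.2]
        _ ≤ M.mRank (H ∪ M.closure Y) :=
            mRank_mono (insert_subset (Or.inr (M.mem_closure_of_mem heY hY)) subset_union_left)
  have hmodular := hmod.2 _ (M.isFlat_closure Y)
  rw [hspan, mRank_closure, ← hH.2] at hmodular
  omega

lemma IsModularFlat.exists_isNonloop_inter_closure_pair
    (hmod : M.IsModularFlat H) (hH : M.IsHyperplane H) (ha : a ∈ M.E \ H) (hb : b ∈ M.E \ H)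
    (hab : M.closure {a} ≠ M.closure {b}) :
    ∃ z ∈ H ∩ M.closure {a, b}, M.IsNonloop z ∧
      H ∩ M.closure {a, b} ⊆ M.closure {z} := by
  have hindep : M.Indep {a, b} := by
    by_contra hdep
    exact hab (((hH.1.isNonloop_of_notMem ha).closure_eq_closure_iff_eq_or_dep
      (hH.1.isNonloop_of_notMem hb)).2 (Or.inr hdep))
  have hpair : M.mRank {a, b} = 2 := by
    have hcast := cast_mRank (M := M) {a, b}
    rw [hindep.eRk_eq_encard, encard_pair (by rintro rfl; exact hab rfl)] at hcast
    exact_mod_cast hcast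
  have hpoint := hmod.mRank_inter_closure_add_one hH hindep.subset_ground (mem_insert a {b}) ha.2
  have hrk : M.eRk (H ∩ M.closure {a, b}) = 1 := by
    rw [← cast_mRank, show M.mRank (H ∩ M.closure {a, b}) = 1 by omega, Nat.cast_one]
  exact (eRk_eq_one_iff (inter_subset_left.trans hH.1.subset_ground)).1 hrk

lemma IsModularFlat.mem_closure_insert_inter_closure_pair
    (hmod : M.IsModularFlat H) (hH : M.IsHyperplane H) (ha : a ∈ M.E \ H) (hb : b ∈ M.E \ H) :
    a ∈ M.closure (insert b (H ∩ M.closure {a, b})) := by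
  by_cases hab : M.closure {a} = M.closure {b}
  · exact M.closure_subset_closure (singleton_subset_iff.2 (mem_insert b _))
      (hab ▸ M.mem_closure_self a ha.1)
  obtain ⟨z, hz, hznl, -⟩ := hmod.exists_isNonloop_inter_closure_pair hH ha hb hab
  have hza : a ∈ M.closure {z, b} :=
    (closure_exchange ⟨hz.2, hH.1.notMem_closure_singleton hb.2 hznl hz.1⟩).1
  exact M.closure_subset_closure (pair_subset (mem_insert_of_mem b hz) (mem_insert b _)) hza

lemma IsModularFlat.inter_closure_pair_subset_trans
    (hmod : M.IsModularFlat H) (hH : M.IsHyperplane H) (ha : a ∈ M.E \ H) (hb : b ∈ M.E \ H)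
    (hc : c ∈ M.E \ H) (hab : H ∩ M.closure {a, b} ⊆ M.closure F)
    (hbc : H ∩ M.closure {b, c} ⊆ M.closure F) :
    H ∩ M.closure {a, c} ⊆ M.closure F := by
  set K := H ∩ M.closure F
  have haK : a ∈ M.closure (insert b K) :=
    M.closure_subset_closure (insert_subset_insert (subset_inter inter_subset_left hab))
      (hmod.mem_closure_insert_inter_closure_pair hH ha hb)
  have hcK : c ∈ M.closure (insert b K) := by
    rw [pair_comm] at hbc
    exact M.closure_subset_closure (insert_subset_insert (subset_inter inter_subset_left hbc))
      (hmod.mem_closure_insert_inter_closure_pair hH hc hb)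
  calc H ∩ M.closure {a, c} ⊆ H ∩ M.closure (insert b K) :=
        inter_subset_inter_right _
          (M.closure_subset_closure_of_subset_closure (pair_subset haK hcK))
    _ ⊆ M.closure K := hH.1.inter_closure_insert_subset inter_subset_left hb.2
    _ ⊆ M.closure F :=
        (M.closure_subset_closure inter_subset_right).trans (M.closure_closure F).subset

lemma IsModularFlat.equivalence_inter_closure_pair_subset
    (hmod : M.IsModularFlat H) (hH : M.IsHyperplane H) (hX : X ⊆ M.E \ H) (F : Set α) :
    Equivalence fun a b : X => H ∩ M.closure {a.1, b.1} ⊆ M.closure F where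
  refl a := (hH.1.inter_closure_pair_subset_loops (hX a.2).2 rfl).trans
    (M.closure_subset_closure (empty_subset F))
  symm h := by rwa [pair_comm]
  trans hab hbc := hmod.inter_closure_pair_subset_trans hH (hX (Subtype.prop _))
    (hX (Subtype.prop _)) (hX (Subtype.prop _)) hab hbc

lemma IsModularFlat.inter_closure_pair_subset_or (hmod : M.IsModularFlat H)
    (hH : M.IsHyperplane H) (hX : X ⊆ M.E \ H) (ha : a ∈ X) (hb : b ∈ X)
    (hcover : M.projUnion H X ⊆ F₁ ∪ F₂) :
    H ∩ M.closure {a, b} ⊆ M.closure F₁ ∨ H ∩ M.closure {a, b} ⊆ M.closure F₂ := by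
  by_cases hab : M.closure {a} = M.closure {b}
  · exact Or.inl ((hH.1.inter_closure_pair_subset_loops (hX ha).2 hab).trans
      (M.closure_subset_closure (empty_subset F₁)))
  obtain ⟨z, hz, -, hpoint⟩ := hmod.exists_isNonloop_inter_closure_pair hH (hX ha) (hX hb) hab
  have hsub (F : Set α) (hzF : z ∈ F) : H ∩ M.closure {a, b} ⊆ M.closure F :=
    hpoint.trans (M.closure_subset_closure (singleton_subset_iff.2 hzF))
  exact (hcover (inter_closure_pair_subset_projUnion ha hb hab hz)).imp (hsub F₁) (hsub F₂)

end RankFinite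

end Matroid

/-- Let `H` be a modular hyperplane and `X` a subset of the cocircuit `E(M) − H`. Then the
union of the projections onto `H` of pairs of distinct non-parallel elements of `X` is a
round subset of `M`. -/
theorem projUnion_round {α : Type*} (M : Matroid α) [M.Finite]
    (H X : Set α) (hH : M.IsHyperplane H) (hmod : M.IsModularFlat H)
    (hX : X ⊆ M.E \ H) :
    M.RoundSet (M.projUnion H X) := by
  refine ⟨projUnion_subset.trans hH.1.subset_ground, ?_⟩
  rintro F₁ F₂ ⟨⟨hF₁, hF₁E⟩, ⟨hF₂, hF₂E⟩, hcover⟩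
  have hrel := hmod.equivalence_inter_closure_pair_subset hH hX
  have htotal : ∀ a b : X, H ∩ M.closure {a.1, b.1} ⊆ M.closure F₁ ∨
      H ∩ M.closure {a.1, b.1} ⊆ M.closure F₂ := fun a b =>
    hmod.inter_closure_pair_subset_or hH hX a.2 b.2 hcover.symm.subset
  rcases (hrel F₁).forall_or_forall_of_forall_or (hrel F₂) htotal with h | h
  · exact hF₁E (eq_projUnion_of_forall_inter_closure_pair_subset hF₁ h)
  · exact hF₂E (eq_projUnion_of_forall_inter_closure_pair_subset hF₂ h)
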